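/- arXiv:1302.5413 — 4 statements merged into one kernel-verified Lean document; each statement's English description precedes it below -/
import Mathlib

section
/- Let τ be a pseudometric on a set V and let γ : x ⇝ v and γ' : y ⇝ v' be paths with total weights τ(γ) ≤ τ(x,v) + ε and τ(γ') ≤ τ(y,v') + ε, where weights of paths are sums of nonnegative edge weights. If γ and γ' share a common vertex w, then τ(x,v') + τ(y,v) ≤ τ(x,v) + τ(y,v') + 2ε. In particular, if ε-optimal paths cross for all ε > 0, then τ(x,v') + τ(y,v) ≤ τ(x,v) + τ(y,v'). -/
/-! Cut both paths at the common vertex and exchange their tails. This yields a path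
`x ⇝ v'` and a path `y ⇝ v` whose weights add up to `τ(γ) + τ(γ')`, and each of them
is at least the corresponding passage time. -/

variable {V : Type*}

/-- The weight of a path (a list of vertices), as the sum of the edge weights of
consecutive pairs. -/
def pathWeight (w : V → V → ℝ) (l : List V) : ℝ :=
  ((l.zip l.tail).map fun p => w p.1 p.2).sum

/-- The passage time between two vertices: the infimum of weights of paths from
`x` to `y`. -/
noncomputable def passageTime (w : V → V → ℝ) (x y : V) : ℝ :=
  sInf {t : ℝ | ∃ l : List V, l.head? = some x ∧ l.getLast? = some y ∧ pathWeight w l = t}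

section

variable (w : V → V → ℝ)

@[simp]
lemma pathWeight_cons_cons (a b : V) (l : List V) :
    pathWeight w (a :: b :: l) = w a b + pathWeight w (b :: l) := by
  simp [pathWeight]

lemma pathWeight_append_cons (l₁ : List V) (m : V) (l₂ : List V) :
    pathWeight w (l₁ ++ m :: l₂) = pathWeight w (l₁ ++ [m]) + pathWeight w (m :: l₂) := by
  induction l₁ with
  | nil => simp [pathWeight]
  | cons a l₁ ih =>
    cases l₁ with
    | nil => simp [pathWeight]
    | cons b l₁ =>
      simp only [List.cons_append, pathWeight_cons_cons] at ih ⊢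
      rw [ih, add_assoc]

lemma pathWeight_exchange_tails (l₁ l₂ l₁' l₂' : List V) (m : V) :
    pathWeight w (l₁ ++ m :: l₂') + pathWeight w (l₁' ++ m :: l₂) =
      pathWeight w (l₁ ++ m :: l₂) + pathWeight w (l₁' ++ m :: l₂') := by
  rw [pathWeight_append_cons w l₁ m l₂', pathWeight_append_cons w l₁' m l₂,
    pathWeight_append_cons w l₁ m l₂, pathWeight_append_cons w l₁' m l₂']
  ring

variable {w}

lemma pathWeight_nonneg (hw : ∀ a b, 0 ≤ w a b) (l : List V) : 0 ≤ pathWeight w l :=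
  List.sum_nonneg fun _ ht => by
    obtain ⟨p, _, rfl⟩ := List.mem_map.1 ht
    exact hw _ _

lemma passageTime_le_pathWeight (hw : ∀ a b, 0 ≤ w a b) {x y : V} {l : List V}
    (hx : l.head? = some x) (hy : l.getLast? = some y) :
    passageTime w x y ≤ pathWeight w l :=
  csInf_le ⟨0, fun _ ⟨l', _, _, hl'⟩ => hl' ▸ pathWeight_nonneg hw l'⟩ ⟨l, hx, hy, rfl⟩

lemma passageTime_le_pathWeight_append_cons (hw : ∀ a b, 0 ≤ w a b) {x y m : V}
    {l₁ l₂ l₁' l₂' : List V} (hx : (l₁ ++ m :: l₂).head? = some x)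
    (hy : (l₁' ++ m :: l₂').getLast? = some y) :
    passageTime w x y ≤ pathWeight w (l₁ ++ m :: l₂') := by
  apply passageTime_le_pathWeight hw
  · simpa [List.head?_append] using hx
  · rwa [List.getLast?_append_cons] at hy ⊢

end

theorem crossing_paths_inequality_general (w : V → V → ℝ) (hw : ∀ a b, 0 ≤ w a b)
    (x y v v' : V) (ε : ℝ) (γ γ' : List V) (wpt : V)
    (hγx : γ.head? = some x) (hγv : γ.getLast? = some v)
    (hγ'y : γ'.head? = some y) (hγ'v' : γ'.getLast? = some v')
    (hγopt : pathWeight w γ ≤ passageTime w x v + ε)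
    (hγ'opt : pathWeight w γ' ≤ passageTime w y v' + ε)
    (hcross : wpt ∈ γ ∧ wpt ∈ γ') :
    passageTime w x v' + passageTime w y v ≤
      passageTime w x v + passageTime w y v' + 2 * ε := by
  obtain ⟨l₁, l₂, rfl⟩ := List.append_of_mem hcross.1
  obtain ⟨l₁', l₂', rfl⟩ := List.append_of_mem hcross.2
  calc passageTime w x v' + passageTime w y v
      ≤ pathWeight w (l₁ ++ wpt :: l₂') + pathWeight w (l₁' ++ wpt :: l₂) :=
        add_le_add (passageTime_le_pathWeight_append_cons hw hγx hγ'v')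
          (passageTime_le_pathWeight_append_cons hw hγ'y hγv)
    _ = pathWeight w (l₁ ++ wpt :: l₂) + pathWeight w (l₁' ++ wpt :: l₂') :=
        pathWeight_exchange_tails w l₁ l₂ l₁' l₂' wpt
    _ ≤ passageTime w x v + passageTime w y v' + 2 * ε := by linarith

theorem crossing_paths_inequality (w : V → V → ℝ) (hw : ∀ a b, 0 ≤ w a b)
    (x y v v' : V) (ε : ℝ) (hε : 0 ≤ ε) (γ γ' : List V) (wpt : V)
    (hγx : γ.head? = some x) (hγv : γ.getLast? = some v)
    (hγ'y : γ'.head? = some y) (hγ'v' : γ'.getLast? = some v')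
    (hγopt : pathWeight w γ ≤ passageTime w x v + ε)
    (hγ'opt : pathWeight w γ' ≤ passageTime w y v' + ε)
    (hcross : wpt ∈ γ ∧ wpt ∈ γ') :
    passageTime w x v' + passageTime w y v ≤
      passageTime w x v + passageTime w y v' + 2 * ε :=
  crossing_paths_inequality_general w hw x y v v' ε γ γ' wpt hγx hγv hγ'y hγ'v' hγopt hγ'opt hcross
end

section
/- Let V₁ ⊆ ℤ² be infinite and connected (in the nearest-neighbor lattice graph) such that the complement V₁ᶜ is also infinite and connected. Let F = {{x,y} : x ∈ V₁, y ∈ V₁ᶜ, ‖x−y‖₁ = 1} be the edge boundary and let F* be the set of dual edges (edges of ℤ² + (1/2,1/2) bisecting edges of F), with W* the set of endpoints of edges in F*. Then in the graph G* = (W*, F*), every vertex has degree exactly 2. -/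
/-! The dual edge boundary of an infinite connected subset of `ℤ²` with infinite
connected complement: every vertex of the dual boundary graph has degree exactly 2.

Dual vertices `ℤ² + (1/2,1/2)` are identified with `ℤ²` (the dual vertex `v*`
corresponds to `v` with `v* = v + (1/2,1/2)`). Under this identification, the
dual edge between adjacent dual vertices `u, v` bisects the primal edge
`crossEdge u v` computed below. -/

/-- Nearest-neighbor adjacency in the square lattice `ℤ²`. -/
def latAdj (x y : ℤ × ℤ) : Prop := |x.1 - y.1| + |x.2 - y.2| = 1

/-- A subset `S ⊆ ℤ²` is connected (in the nearest-neighbor lattice graph). -/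
def latConnected (S : Set (ℤ × ℤ)) : Prop :=
  ∀ x ∈ S, ∀ y ∈ S, ∃ l : List (ℤ × ℤ), l.Chain' latAdj ∧ (∀ z ∈ l, z ∈ S) ∧
    l.head? = some x ∧ l.getLast? = some y

/-- Coordinatewise maximum of two lattice points. -/
def pmax (u v : ℤ × ℤ) : ℤ × ℤ := (max u.1 v.1, max u.2 v.2)

/-- The primal edge (as a two-element set of its endpoints) bisected by the dual
edge with endpoints the dual vertices `u` and `v` (for `u, v` adjacent). -/
def crossEdge (u v : ℤ × ℤ) : Set (ℤ × ℤ) :=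
  {pmax u v, pmax u v + (1 - |u.1 - v.1|, 1 - |u.2 - v.2|)}

/-- The edge boundary of `V₁`: primal edges with one endpoint in `V₁` and one in
the complement. -/
def edgeBoundary (V₁ : Set (ℤ × ℤ)) : Set (Set (ℤ × ℤ)) :=
  {e | ∃ x y, e = {x, y} ∧ latAdj x y ∧ x ∈ V₁ ∧ y ∉ V₁}

/-- Adjacency in the dual boundary graph `G* = (W*, F*)`: two adjacent dual
vertices joined by a dual edge bisecting a boundary edge of `V₁`. -/
def dualAdj (V₁ : Set (ℤ × ℤ)) (u v : ℤ × ℤ) : Prop :=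
  latAdj u v ∧ crossEdge u v ∈ edgeBoundary V₁

/-- The vertex set `W*` of the dual boundary graph: endpoints of dual edges in `F*`. -/
def dualVertices (V₁ : Set (ℤ × ℤ)) : Set (ℤ × ℤ) :=
  {u | ∃ v, dualAdj V₁ u v}

/-! The dual edges at a dual vertex `u` cross the four sides of the unit square with corners
`u`, `u + (1,0)`, `u + (1,1)`, `u + (0,1)`, and a side is crossed by `F*` exactly when its two
corners lie on different sides of `V₁`. Going once around the square, membership in `V₁` changes
an even number of times, so the degree is `0`, `2` or `4`; it is positive on `W*`, and it is `4`
only for a checkerboard square, one diagonal in `V₁` and the other in `V₁ᶜ`. Connectedness of `V₁`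
and `V₁ᶜ` would then provide disjoint lattice paths `P` and `Q` joining the opposite corners of the
square. This is impossible: count mod 2 the steps of `P` crossed by the horizontal ray issuing to
the right from `z + (0, 1/2)`. Summing local changes along `P` shows that this count differs by `1`
between the two ends of `Q`; summing them along `Q`, which never meets `P`, shows that it differs
by `0`. -/

namespace List

variable {α : Type*}

theorem sum_map_consecutivePairs_sub {G : Type*} [AddCommGroup G] (F : α → G) :
    ∀ {l : List α} {x y : α}, l.head? = some x → l.getLast? = some y →
      (l.consecutivePairs.map fun s => F s.2 - F s.1).sum = F y - F x
  | [], _, _, hx, _ => by simp at hx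
  | [_], _, _, hx, hy => by simp_all [consecutivePairs]
  | z :: w :: l, x, y, hx, hy => by
    obtain rfl : z = x := by simpa using hx
    rw [getLast?_cons_cons] at hy
    have ih := sum_map_consecutivePairs_sub F (l := w :: l) rfl hy
    simp only [consecutivePairs, tail_cons, zip_cons_cons, map_cons, sum_cons] at ih ⊢
    rw [ih]; abel

theorem sum_map_sub {G : Type*} [SubtractionCommMonoid G] (l : List α) (f g : α → G) :
    (l.map fun a => f a - g a).sum = (l.map f).sum - (l.map g).sum := by
  simpa using Multiset.sum_map_sub (m := (l : Multiset α)) (f := f) (g := g)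

theorem fst_mem_of_mem_consecutivePairs {l : List α} {s : α × α} (h : s ∈ l.consecutivePairs) :
    s.1 ∈ l :=
  (of_mem_zip h).1

theorem snd_mem_of_mem_consecutivePairs {l : List α} {s : α × α} (h : s ∈ l.consecutivePairs) :
    s.2 ∈ l :=
  mem_of_mem_tail (of_mem_zip h).2

theorem IsChain.rel_of_mem_consecutivePairs {R : α → α → Prop} :
    ∀ {l : List α}, l.IsChain R → ∀ {s}, s ∈ l.consecutivePairs → R s.1 s.2
  | [], _, _, hs => by simp at hs
  | [_], _, _, hs => by simp [consecutivePairs] at hs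
  | _ :: _ :: _, h, _, hs => by
    rw [isChain_cons_cons] at h
    rcases mem_cons.1 hs with rfl | hs
    · exact h.1
    · exact h.2.rel_of_mem_consecutivePairs hs

end List

def parity (P : Prop) [Decidable P] : ZMod 2 := if P then 1 else 0

theorem parity_sub_parity (P Q : Prop) [Decidable P] [Decidable Q] :
    parity P - parity Q = parity (¬(P ↔ Q)) := by
  unfold parity; by_cases P <;> by_cases Q <;> simp_all

theorem parity_inj {P Q : Prop} [Decidable P] [Decidable Q] :
    parity P = parity Q ↔ (P ↔ Q) := by
  unfold parity; by_cases P <;> by_cases Q <;> simp_all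

theorem latAdj_iff (x y : ℤ × ℤ) : latAdj x y ↔
    x.1 = y.1 ∧ (x.2 = y.2 + 1 ∨ y.2 = x.2 + 1) ∨ x.2 = y.2 ∧ (x.1 = y.1 + 1 ∨ y.1 = x.1 + 1) := by
  unfold latAdj
  rcases abs_cases (x.1 - y.1) with ⟨h1, _⟩ | ⟨h1, _⟩ <;>
    rcases abs_cases (x.2 - y.2) with ⟨h2, _⟩ | ⟨h2, _⟩ <;> rw [h1, h2] <;> omega

/-- `rayCrossing z p q = 1` iff the lattice edge `[p, q]` crosses the ray going right from
`z + (0, 1/2)`. -/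
def rayCrossing (z p q : ℤ × ℤ) : ZMod 2 := parity (p.1 = q.1 ∧ min p.2 q.2 = z.2 ∧ z.1 < p.1)

/-- `raySweep z z' p = 1` iff `p` lies in the half-strip swept by that ray as its base point
moves from `z` to the neighbour `z'`. -/
def raySweep (z z' p : ℤ × ℤ) : ZMod 2 := parity (z.1 = z'.1 ∧ p.2 = max z.2 z'.2 ∧ z.1 < p.1)

/-- Both sides are the parity of the number of crossings of `[p, q]` with the boundary of the
swept half-strip. -/
theorem rayCrossing_sub_rayCrossing {z z' p q : ℤ × ℤ} (hz : latAdj z z') (hp : latAdj p q)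
    (hzp : z ≠ p) (hzq : z ≠ q) (hz'p : z' ≠ p) (hz'q : z' ≠ q) :
    rayCrossing z' p q - rayCrossing z p q = raySweep z z' q - raySweep z z' p := by
  simp only [rayCrossing, raySweep, parity_sub_parity, parity_inj, ne_eq, Prod.ext_iff] at *
  rw [latAdj_iff] at hz hp
  rcases hz with ⟨_, _ | _⟩ | ⟨_, _ | _⟩ <;> rcases hp with ⟨_, _ | _⟩ | ⟨_, _ | _⟩ <;> omega

/-- `diagCrossing u z = 1` iff the ray from `z + (0, 1/2)` crosses the diagonal from `u`
to `u + (1, 1)`. -/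
def diagCrossing (u z : ℤ × ℤ) : ZMod 2 := parity (z.2 = u.2 ∧ z.1 ≤ u.1)

/-- `antidiagSweep u p = 1` iff `p` lies in the region swept by the ray as its base point moves
along the antidiagonal from `u + (1, 0)` to `u + (0, 1)`. -/
def antidiagSweep (u p : ℤ × ℤ) : ZMod 2 := parity (p.2 = u.2 + 1 ∧ u.1 + 1 ≤ p.1)

theorem raySweep_sub_raySweep_diag {u z z' : ℤ × ℤ} (hz : latAdj z z') (hzu : z ≠ u)
    (hz'u : z' ≠ u) :
    raySweep z z' (u + (1, 1)) - raySweep z z' u = diagCrossing u z' - diagCrossing u z := by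
  simp only [raySweep, diagCrossing, parity_sub_parity, parity_inj, ne_eq, Prod.ext_iff,
    Prod.fst_add, Prod.snd_add] at *
  rw [latAdj_iff] at hz
  omega

theorem rayCrossing_sub_rayCrossing_antidiag {u p q : ℤ × ℤ} (hp : latAdj p q)
    (hpb : p ≠ u + (1, 0)) (hqb : q ≠ u + (1, 0)) (hpd : p ≠ u + (0, 1)) (hqd : q ≠ u + (0, 1)) :
    rayCrossing (u + (0, 1)) p q - rayCrossing (u + (1, 0)) p q
      = antidiagSweep u q - antidiagSweep u p := by
  simp only [rayCrossing, antidiagSweep, parity_sub_parity, parity_inj, ne_eq, Prod.ext_iff,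
    Prod.fst_add, Prod.snd_add] at *
  rw [latAdj_iff] at hp
  omega

def IsLatPath (l : List (ℤ × ℤ)) (x y : ℤ × ℤ) : Prop :=
  l.IsChain latAdj ∧ l.head? = some x ∧ l.getLast? = some y

theorem IsLatPath.head_mem {l : List (ℤ × ℤ)} {x y : ℤ × ℤ} (h : IsLatPath l x y) : x ∈ l :=
  List.mem_of_mem_head? h.2.1

theorem IsLatPath.getLast_mem {l : List (ℤ × ℤ)} {x y : ℤ × ℤ} (h : IsLatPath l x y) : y ∈ l :=
  List.mem_of_mem_getLast? h.2.2

theorem IsLatPath.sum_map_consecutivePairs_sub {G : Type*} [AddCommGroup G] (F : ℤ × ℤ → G)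
    {l : List (ℤ × ℤ)} {x y : ℤ × ℤ} (h : IsLatPath l x y) :
    (l.consecutivePairs.map fun s => F s.2 - F s.1).sum = F y - F x :=
  List.sum_map_consecutivePairs_sub F h.2.1 h.2.2

def rayCrossings (l : List (ℤ × ℤ)) (z : ℤ × ℤ) : ZMod 2 :=
  (l.consecutivePairs.map fun e => rayCrossing z e.1 e.2).sum

theorem IsLatPath.rayCrossings_sub_rayCrossings {l : List (ℤ × ℤ)} {a c z z' : ℤ × ℤ}
    (hl : IsLatPath l a c) (hz : latAdj z z') (hzl : z ∉ l) (hz'l : z' ∉ l) :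
    rayCrossings l z' - rayCrossings l z = raySweep z z' c - raySweep z z' a := by
  rw [rayCrossings, rayCrossings, ← List.sum_map_sub, ← hl.sum_map_consecutivePairs_sub]
  refine congrArg List.sum (List.map_congr_left fun e he => ?_)
  have he₁ := List.fst_mem_of_mem_consecutivePairs he
  have he₂ := List.snd_mem_of_mem_consecutivePairs he
  exact rayCrossing_sub_rayCrossing hz (hl.1.rel_of_mem_consecutivePairs he)
    (ne_of_mem_of_not_mem he₁ hzl).symm (ne_of_mem_of_not_mem he₂ hzl).symm
    (ne_of_mem_of_not_mem he₁ hz'l).symm (ne_of_mem_of_not_mem he₂ hz'l).symm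

theorem IsLatPath.rayCrossings_sub_eq_one {P : List (ℤ × ℤ)} {u : ℤ × ℤ}
    (hP : IsLatPath P u (u + (1, 1))) (hb : u + (1, 0) ∉ P) (hd : u + (0, 1) ∉ P) :
    rayCrossings P (u + (0, 1)) - rayCrossings P (u + (1, 0)) = 1 := by
  rw [rayCrossings, rayCrossings, ← List.sum_map_sub]
  calc _ = (P.consecutivePairs.map fun e => antidiagSweep u e.2 - antidiagSweep u e.1).sum := by
        refine congrArg List.sum (List.map_congr_left fun e he => ?_)
        have he₁ := List.fst_mem_of_mem_consecutivePairs he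
        have he₂ := List.snd_mem_of_mem_consecutivePairs he
        exact rayCrossing_sub_rayCrossing_antidiag (hP.1.rel_of_mem_consecutivePairs he)
          (ne_of_mem_of_not_mem he₁ hb) (ne_of_mem_of_not_mem he₂ hb)
          (ne_of_mem_of_not_mem he₁ hd) (ne_of_mem_of_not_mem he₂ hd)
    _ = 1 := by
        rw [hP.sum_map_consecutivePairs_sub]
        simp [antidiagSweep, parity]

theorem IsLatPath.rayCrossings_sub_eq_zero {P Q : List (ℤ × ℤ)} {u : ℤ × ℤ}
    (hP : IsLatPath P u (u + (1, 1))) (hQ : IsLatPath Q (u + (1, 0)) (u + (0, 1)))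
    (hPQ : P.Disjoint Q) :
    rayCrossings P (u + (0, 1)) - rayCrossings P (u + (1, 0)) = 0 := by
  rw [← hQ.sum_map_consecutivePairs_sub]
  calc _ = (Q.consecutivePairs.map fun s => diagCrossing u s.2 - diagCrossing u s.1).sum := by
        refine congrArg List.sum (List.map_congr_left fun s hs => ?_)
        have hs₁ := List.fst_mem_of_mem_consecutivePairs hs
        have hs₂ := List.snd_mem_of_mem_consecutivePairs hs
        have hadj := hQ.1.rel_of_mem_consecutivePairs hs
        rw [hP.rayCrossings_sub_rayCrossings hadj (fun h => hPQ h hs₁) (fun h => hPQ h hs₂)]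
        exact raySweep_sub_raySweep_diag hadj (ne_of_mem_of_not_mem hs₁ fun h => hPQ hP.head_mem h)
          (ne_of_mem_of_not_mem hs₂ fun h => hPQ hP.head_mem h)
    _ = 0 := by
        rw [hQ.sum_map_consecutivePairs_sub]
        simp [diagCrossing, parity]

theorem IsLatPath.not_disjoint_of_diagonals {P Q : List (ℤ × ℤ)} {u : ℤ × ℤ}
    (hP : IsLatPath P u (u + (1, 1))) (hQ : IsLatPath Q (u + (1, 0)) (u + (0, 1))) :
    ¬ P.Disjoint Q := fun hPQ =>
  one_ne_zero <| (hP.rayCrossings_sub_eq_one (fun h => hPQ h hQ.head_mem)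
    (fun h => hPQ h hQ.getLast_mem)).symm.trans (hP.rayCrossings_sub_eq_zero hQ hPQ)

def plaquetteCorner (u : ℤ × ℤ) (i : Fin 4) : ℤ × ℤ := u + ![(0, 0), (1, 0), (1, 1), (0, 1)] i

def dualNeighbor (u : ℤ × ℤ) (i : Fin 4) : ℤ × ℤ := u + ![(0, -1), (1, 0), (0, 1), (-1, 0)] i

theorem latAdj_iff_exists_dualNeighbor {u v : ℤ × ℤ} : latAdj u v ↔ ∃ i, v = dualNeighbor u i := by
  simp only [latAdj_iff, Fin.exists_fin_succ, dualNeighbor, Prod.ext_iff, Prod.fst_add,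
    Prod.snd_add, Matrix.cons_val_zero, Matrix.cons_val_succ, IsEmpty.exists_iff, or_false]
  omega

theorem dualNeighbor_injective (u : ℤ × ℤ) : Function.Injective (dualNeighbor u) := by
  intro i j h
  fin_cases i <;> fin_cases j <;> simp_all [dualNeighbor, Prod.ext_iff]

theorem latAdj_plaquetteCorner (u : ℤ × ℤ) (i : Fin 4) :
    latAdj (plaquetteCorner u i) (plaquetteCorner u (i + 1)) := by
  rw [latAdj_iff]; fin_cases i <;> simp [plaquetteCorner]

theorem crossEdge_dualNeighbor (u : ℤ × ℤ) (i : Fin 4) :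
    crossEdge u (dualNeighbor u i) = {plaquetteCorner u i, plaquetteCorner u (i + 1)} := by
  obtain ⟨a, b⟩ := u
  fin_cases i <;> simp [crossEdge, pmax, dualNeighbor, plaquetteCorner, Set.pair_comm]

theorem pair_mem_edgeBoundary_iff {V : Set (ℤ × ℤ)} {p q : ℤ × ℤ} (h : latAdj p q) :
    {p, q} ∈ edgeBoundary V ↔ ¬ (p ∈ V ↔ q ∈ V) := by
  constructor
  · rintro ⟨x, y, hxy, -, hx, hy⟩
    rcases Set.pair_eq_pair_iff.1 hxy with ⟨rfl, rfl⟩ | ⟨rfl, rfl⟩ <;> tauto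
  · intro hpq
    by_cases hp : p ∈ V
    · exact ⟨p, q, rfl, h, hp, fun hq => hpq (iff_of_true hp hq)⟩
    · refine ⟨q, p, Set.pair_comm p q, ?_, by tauto, hp⟩
      rw [latAdj_iff] at h ⊢; omega

theorem dualAdj_iff {V : Set (ℤ × ℤ)} {u v : ℤ × ℤ} : dualAdj V u v ↔
    ∃ i, dualNeighbor u i = v ∧ ¬ (plaquetteCorner u i ∈ V ↔ plaquetteCorner u (i + 1) ∈ V) := by
  rw [dualAdj, latAdj_iff_exists_dualNeighbor]
  constructor
  · rintro ⟨⟨i, rfl⟩, hi⟩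
    rw [crossEdge_dualNeighbor, pair_mem_edgeBoundary_iff (latAdj_plaquetteCorner u i)] at hi
    exact ⟨i, rfl, hi⟩
  · rintro ⟨i, rfl, hi⟩
    rw [crossEdge_dualNeighbor, pair_mem_edgeBoundary_iff (latAdj_plaquetteCorner u i)]
    exact ⟨⟨i, rfl⟩, hi⟩

theorem ncard_setOf_dualAdj (V : Set (ℤ × ℤ)) (u : ℤ × ℤ) :
    {v | dualAdj V u v}.ncard =
      {i | ¬ (plaquetteCorner u i ∈ V ↔ plaquetteCorner u (i + 1) ∈ V)}.ncard := by
  have hset : {v | dualAdj V u v} =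
      dualNeighbor u '' {i | ¬ (plaquetteCorner u i ∈ V ↔ plaquetteCorner u (i + 1) ∈ V)} := by
    ext v
    simp only [Set.mem_ofPred_eq, Set.mem_image, dualAdj_iff, and_comm]
  rw [hset, Set.ncard_image_of_injective _ (dualNeighbor_injective u)]

theorem ncard_setOf_not_iff_succ_fin_four (p : Fin 4 → Prop) (hne : ∃ i, ¬ (p i ↔ p (i + 1)))
    (h₀ : ¬ (p 0 ∧ p 2 ∧ ¬ p 1 ∧ ¬ p 3)) (h₁ : ¬ (¬ p 0 ∧ ¬ p 2 ∧ p 1 ∧ p 3)) :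
    {i | ¬ (p i ↔ p (i + 1))}.ncard = 2 := by
  classical
  have key : ∀ b : Fin 4 → Bool, (∃ i, b i ≠ b (i + 1)) → ¬ (b 0 = b 2 ∧ b 1 = b 3 ∧ b 0 ≠ b 1) →
      (Finset.univ.filter fun i => b i ≠ b (i + 1)).card = 2 := by
    decide
  rw [Set.ncard_eq_toFinset_card']
  convert key (fun i => decide (p i)) (by simpa using hne)
    (by simp only [ne_eq, decide_eq_decide]; tauto) using 2
  ext i
  simp

namespace latConnected

theorem not_checkerboard {S : Set (ℤ × ℤ)} (hS : latConnected S) (hSc : latConnected Sᶜ)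
    (u : ℤ × ℤ) :
    ¬ (plaquetteCorner u 0 ∈ S ∧ plaquetteCorner u 2 ∈ S ∧
      plaquetteCorner u 1 ∉ S ∧ plaquetteCorner u 3 ∉ S) := by
  rintro ⟨ha, hc, hb, hd⟩
  simp only [plaquetteCorner, Fin.isValue, Matrix.cons_val, Prod.mk_zero_zero, add_zero]
    at ha hb hc hd
  obtain ⟨P, hPc, hPS, hP⟩ := hS _ ha _ hc
  obtain ⟨Q, hQc, hQS, hQ⟩ := hSc _ hb _ hd
  exact IsLatPath.not_disjoint_of_diagonals ⟨hPc, hP⟩ ⟨hQc, hQ⟩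
    fun x hxP hxQ => hQS x hxQ (hPS x hxP)

end latConnected

theorem dual_boundary_degree_two_general (V₁ : Set (ℤ × ℤ))
    (hV₁conn : latConnected V₁) (hV₁cconn : latConnected V₁ᶜ) :
    ∀ u ∈ dualVertices V₁, Set.ncard {v | dualAdj V₁ u v} = 2 := by
  rintro u ⟨v, huv⟩
  obtain ⟨i, -, hi⟩ := dualAdj_iff.1 huv
  rw [ncard_setOf_dualAdj]
  refine ncard_setOf_not_iff_succ_fin_four _ ⟨i, hi⟩ (hV₁conn.not_checkerboard hV₁cconn u) ?_
  have := hV₁cconn.not_checkerboard (by rwa [compl_compl]) u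
  simpa only [Set.mem_compl_iff, not_not] using this

theorem dual_boundary_degree_two (V₁ : Set (ℤ × ℤ))
    (hV₁inf : V₁.Infinite) (hV₁conn : latConnected V₁)
    (hV₁cinf : V₁ᶜ.Infinite) (hV₁cconn : latConnected V₁ᶜ) :
    ∀ u ∈ dualVertices V₁, Set.ncard {v | dualAdj V₁ u v} = 2 :=
  dual_boundary_degree_two_general V₁ hV₁conn hV₁cconn
end

section
/- Suppose ℙ satisfies the upward finite energy property at edge e, let λ > 0 satisfy ℙ(ω_e ≥ λ) > 0, and let A be an e-increasing event with ℙ(A) > 0. Then ℙ(A ∩ {ω_e ≥ λ}) > 0. -/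
/-! Let `B` be the event that resetting `ω_e` to `λ` lands in `A`. It depends on `ω̌` only,
contains `A ∩ {ω_e < λ}`, and `B ∩ {ω_e ≥ λ} ⊆ A` since `A` is `e`-increasing. If
`ℙ(A ∩ {ω_e ≥ λ}) = 0`, then `ℙ(B) > 0` while `∫_B ℙ(ω_e ≥ λ | ω̌) = ℙ(B ∩ {ω_e ≥ λ}) = 0`,
contradicting the almost sure positivity of the conditional probability. -/

open MeasureTheory

variable {ι : Type*} [Countable ι] [DecidableEq ι]

/-- The σ-algebra generated by the weights of edges other than `e`
(the information `ω̌`). -/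
def checkSigma (e : ι) : MeasurableSpace (ι → ℝ) :=
  MeasurableSpace.comap (fun ω (f : {f : ι // f ≠ e}) => ω f.1) inferInstance

def EIncreasing (e : ι) (A : Set (ι → ℝ)) : Prop :=
  ∀ ω ∈ A, ∀ r : ℝ, 0 < r → Function.update ω e (ω e + r) ∈ A

theorem measure_inter_pos_of_ae_condExp_indicator_pos {Ω : Type*} {m m₀ : MeasurableSpace Ω}
    (hm : m ≤ m₀) {μ : Measure Ω} [IsFiniteMeasure μ] {S B : Set Ω} (hS : MeasurableSet S)
    (hB : MeasurableSet[m] B)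
    (hpos : ∀ᵐ ω ∂μ, 0 < μ[S.indicator (fun _ => (1 : ℝ)) | m] ω) (hμB : 0 < μ B) :
    0 < μ (B ∩ S) := by
  set g := μ[S.indicator (fun _ => (1 : ℝ)) | m]
  have hintegral : ∫ ω in B, g ω ∂μ = μ.real (B ∩ S) := by
    rw [setIntegral_condExp hm ((integrable_const 1).indicator hS) hB, setIntegral_indicator hS,
      Set.inter_comm]
    simp
  have hsupport : μ (Function.support g)ᶜ = 0 := ae_iff.mp (hpos.mono fun _ h => h.ne')
  have hintegral_pos : 0 < ∫ ω in B, g ω ∂μ := by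
    rw [setIntegral_pos_iff_support_of_nonneg_ae ((ae_restrict_of_ae hpos).mono fun _ h => h.le)
      integrable_condExp.integrableOn, Set.inter_comm, measure_inter_conull hsupport]
    exact hμB
  rw [hintegral] at hintegral_pos
  exact (ENNReal.toReal_pos_iff.mp hintegral_pos).1

omit [Countable ι] [DecidableEq ι] in
theorem checkSigma_le (e : ι) : checkSigma e ≤ MeasurableSpace.pi :=
  (measurable_pi_lambda _ fun f => measurable_pi_apply f.1).comap_le

omit [Countable ι] in
theorem measurable_update_checkSigma (e : ι) (c : ℝ) :
    Measurable[checkSigma e] fun ω : ι → ℝ => Function.update ω e c := by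
  refine @measurable_pi_lambda _ _ _ (checkSigma e) _ _ fun i => ?_
  by_cases hi : i = e
  · subst hi
    simp only [Function.update_self]
    exact measurable_const
  · simp only [Function.update_of_ne hi]
    have hproj : Measurable[checkSigma e] fun (ω : ι → ℝ) (f : {f : ι // f ≠ e}) => ω f.1 :=
      comap_measurable _
    exact (measurable_pi_apply (⟨i, hi⟩ : {f : ι // f ≠ e})).comp hproj

omit [Countable ι] in
theorem EIncreasing.update_mem_of_le {e : ι} {A : Set (ι → ℝ)} (hA : EIncreasing e A)
    {ω : ι → ℝ} (hω : ω ∈ A) {c : ℝ} (hc : ω e ≤ c) : Function.update ω e c ∈ A := by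
  rcases hc.eq_or_lt with rfl | hlt
  · simpa using hω
  · simpa using hA ω hω (c - ω e) (sub_pos.mpr hlt)

theorem edge_modification_general
    (ℙ : Measure (ι → ℝ)) [IsProbabilityMeasure ℙ] (e : ι)
    (hUFE : ∀ lam : ℝ, 0 < ℙ {ω | lam ≤ ω e} →
      ∀ᵐ ω ∂ℙ, 0 < (ℙ[Set.indicator {ω' | lam ≤ ω' e} (fun _ => (1 : ℝ)) | checkSigma e]) ω)
    (lam : ℝ) (hlampos : 0 < ℙ {ω | lam ≤ ω e})
    (A : Set (ι → ℝ)) (hA : MeasurableSet A) (hAinc : EIncreasing e A)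
    (hApos : 0 < ℙ A) :
    0 < ℙ (A ∩ {ω | lam ≤ ω e}) := by
  set S := {ω : ι → ℝ | lam ≤ ω e}
  set B := {ω : ι → ℝ | Function.update ω e lam ∈ A}
  have hB : MeasurableSet[checkSigma e] B := measurable_update_checkSigma e lam hA
  have hA_sub : A ⊆ (A ∩ S) ∪ B := fun ω hω =>
    (le_or_gt lam (ω e)).imp (fun h => ⟨hω, h⟩) fun h => hAinc.update_mem_of_le hω h.le
  have hBS_sub : B ∩ S ⊆ A ∩ S := fun ω ⟨hωB, hωS⟩ =>
    ⟨by simpa using hAinc.update_mem_of_le hωB (c := ω e) (by rwa [Function.update_self]), hωS⟩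
  refine pos_iff_ne_zero.mpr fun hAS => ?_
  have hBpos : 0 < ℙ B := hApos.trans_le <| calc
    ℙ A ≤ ℙ (A ∩ S) + ℙ B := (measure_mono hA_sub).trans (measure_union_le _ _)
    _ = ℙ B := by rw [hAS, zero_add]
  exact (measure_inter_pos_of_ae_condExp_indicator_pos (checkSigma_le e)
    (measurableSet_le measurable_const (measurable_pi_apply e)) hB (hUFE lam hlampos)
    hBpos).ne' (measure_mono_null hBS_sub hAS)

theorem edge_modification
    (ℙ : Measure (ι → ℝ)) [IsProbabilityMeasure ℙ] (e : ι)
    (hUFE : ∀ lam : ℝ, 0 < ℙ {ω | lam ≤ ω e} →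
      ∀ᵐ ω ∂ℙ, 0 < (ℙ[Set.indicator {ω' | lam ≤ ω' e} (fun _ => (1 : ℝ)) | checkSigma e]) ω)
    (lam : ℝ) (hlam : 0 < lam) (hlampos : 0 < ℙ {ω | lam ≤ ω e})
    (A : Set (ι → ℝ)) (hA : MeasurableSet A) (hAinc : EIncreasing e A)
    (hApos : 0 < ℙ A) :
    0 < ℙ (A ∩ {ω | lam ≤ ω e}) :=
  edge_modification_general ℙ e hUFE lam hlampos A hA hAinc hApos
end

section
/- Let d : ℤ → ℤ be a (random) monotone nondecreasing function such that d(n) − n has the same distribution as d(0) for all n. Fix ε > 0, k ≥ 1 and let p = ℙ(|gap event|) where the gap event forces d(jd₀) − d((j−1)d₀) ≥ εk along an ergodic sequence of shifts of period d₀. Then p ≤ d₀/(εk). In particular, the probability that two coalescing-ordered exit points on the line L_k at horizontal positions d_k(0) and d_k(v) differ by at least εk tends to 0 as k → ∞. -/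
open MeasureTheory Filter Set
open scoped ENNReal Topology

/-! With `X = d 0` and `Y = d d₀`, monotonicity gives `X ≤ Y` and stationarity says that
`Y - d₀` has the law of `X`, so formally `𝔼[Y - X] = d₀` and Markov's inequality gives the
bound. As `X` need not be integrable, `𝔼[Y - X] ≤ d₀` is obtained by clamping `X` and `Y` to
`[-M, M]`, a monotone 1-Lipschitz map, and letting `M → ∞` with Fatou's lemma. -/

section Truncation

open ProbabilityTheory

variable {Ω : Type*} [MeasurableSpace Ω] {μ : Measure Ω} {X Y : Ω → ℝ} {a : ℝ}

theorem integrable_projIcc_comp [IsFiniteMeasure μ] (hX : AEMeasurable X μ) {M : ℝ}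
    (hM : -M ≤ M) : Integrable (fun ω => (projIcc (-M) M hM (X ω) : ℝ)) μ :=
  Integrable.of_mem_Icc (-M) M
    ((continuous_subtype_val.comp continuous_projIcc).measurable.comp_aemeasurable hX)
    (ae_of_all _ fun ω => (projIcc (-M) M hM (X ω)).2)

theorem ProbabilityTheory.IdentDistrib.aemeasurable_of_sub_const
    (hid : IdentDistrib (fun ω => Y ω - a) X μ μ) : AEMeasurable Y μ := by
  simpa using hid.aemeasurable_fst.add_const a

theorem integral_projIcc_sub_le_of_identDistrib [IsProbabilityMeasure μ] (ha : 0 ≤ a)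
    (hid : IdentDistrib (fun ω => Y ω - a) X μ μ) {M : ℝ} (hM : -M ≤ M) :
    ∫ ω, ((projIcc (-M) M hM (Y ω) : ℝ) - projIcc (-M) M hM (X ω)) ∂μ ≤ a := by
  set P : ℝ → ℝ := fun x => projIcc (-M) M hM x
  have hint : ∀ {Z : Ω → ℝ}, AEMeasurable Z μ → Integrable (fun ω => P (Z ω)) μ :=
    fun hZ => integrable_projIcc_comp hZ hM
  have hY := hid.aemeasurable_of_sub_const
  have hshift : ∀ y, P y ≤ P (y - a) + a := fun y => by
    have := (le_abs_self _).trans (abs_projIcc_sub_projIcc hM (c := y) (d := y - a))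
    rw [sub_sub_cancel, abs_of_nonneg ha] at this
    linarith
  have hlaw : ∫ ω, P (Y ω - a) ∂μ = ∫ ω, P (X ω) ∂μ :=
    (hid.comp (continuous_subtype_val.comp continuous_projIcc).measurable).integral_eq
  calc ∫ ω, (P (Y ω) - P (X ω)) ∂μ
      = ∫ ω, P (Y ω) ∂μ - ∫ ω, P (X ω) ∂μ := integral_sub (hint hY) (hint hid.aemeasurable_snd)
    _ ≤ ∫ ω, (P (Y ω - a) + a) ∂μ - ∫ ω, P (X ω) ∂μ := by
        gcongr
        exacts [hint hY, (hint hid.aemeasurable_fst).add (integrable_const a), fun ω => hshift _]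
    _ = a := by
        rw [integral_add (hint hid.aemeasurable_fst) (integrable_const a), hlaw]
        simp

theorem lintegral_ofReal_sub_le_of_identDistrib [IsProbabilityMeasure μ] (ha : 0 ≤ a)
    (hXY : ∀ ω, X ω ≤ Y ω) (hid : IdentDistrib (fun ω => Y ω - a) X μ μ) :
    ∫⁻ ω, ENNReal.ofReal (Y ω - X ω) ∂μ ≤ ENNReal.ofReal a := by
  have hM : ∀ M : ℕ, -(M : ℝ) ≤ M := fun M => neg_le_self M.cast_nonneg
  set D : ℕ → Ω → ℝ := fun M ω =>
    (projIcc (-(M : ℝ)) M (hM M) (Y ω) : ℝ) - projIcc (-(M : ℝ)) M (hM M) (X ω)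
  have hD_int : ∀ M, Integrable (D M) μ := fun M =>
    (integrable_projIcc_comp hid.aemeasurable_of_sub_const (hM M)).sub
      (integrable_projIcc_comp hid.aemeasurable_snd (hM M))
  have hD_lim : ∀ ω, Tendsto (fun M => ENNReal.ofReal (D M ω)) atTop
      (𝓝 (ENNReal.ofReal (Y ω - X ω))) := fun ω => by
    refine tendsto_const_nhds.congr' ?_
    filter_upwards [eventually_ge_atTop ⌈max |X ω| |Y ω|⌉₊] with M hM'
    have hX := (le_max_left _ _).trans (Nat.ceil_le.1 hM')
    have hY := (le_max_right _ _).trans (Nat.ceil_le.1 hM')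
    simp only [D, projIcc_of_mem _ (abs_le.1 hX), projIcc_of_mem _ (abs_le.1 hY)]
  have hD_lintegral : ∀ M, ∫⁻ ω, ENNReal.ofReal (D M ω) ∂μ ≤ ENNReal.ofReal a := fun M => by
    rw [← ofReal_integral_eq_lintegral_ofReal (hD_int M)
      (ae_of_all _ fun ω => sub_nonneg.2 (monotone_projIcc _ (hXY ω)))]
    exact ENNReal.ofReal_le_ofReal (integral_projIcc_sub_le_of_identDistrib ha hid (hM M))
  calc ∫⁻ ω, ENNReal.ofReal (Y ω - X ω) ∂μ
      = ∫⁻ ω, liminf (fun M => ENNReal.ofReal (D M ω)) atTop ∂μ :=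
        lintegral_congr fun ω => (hD_lim ω).liminf_eq.symm
    _ ≤ liminf (fun M => ∫⁻ ω, ENNReal.ofReal (D M ω) ∂μ) atTop :=
        lintegral_liminf_le' fun M => (hD_int M).aemeasurable.ennreal_ofReal
    _ ≤ ENNReal.ofReal a := liminf_le_of_frequently_le' (Frequently.of_forall hD_lintegral)

theorem toReal_measure_sub_ge_le_div_of_identDistrib [IsProbabilityMeasure μ] (ha : 0 ≤ a)
    (hXY : ∀ ω, X ω ≤ Y ω) (hid : IdentDistrib (fun ω => Y ω - a) X μ μ) {c : ℝ} (hc : 0 < c) :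
    (μ {ω | c ≤ Y ω - X ω}).toReal ≤ a / c := by
  have hdiff : AEMeasurable (fun ω => ENNReal.ofReal (Y ω - X ω)) μ :=
    (hid.aemeasurable_of_sub_const.sub hid.aemeasurable_snd).ennreal_ofReal
  have hmarkov := (mul_meas_ge_le_lintegral₀ hdiff (ENNReal.ofReal c)).trans
    (lintegral_ofReal_sub_le_of_identDistrib ha hXY hid)
  simp only [ENNReal.ofReal_le_ofReal_iff', hc.not_ge, or_false] at hmarkov
  have hreal := ENNReal.toReal_mono ENNReal.ofReal_ne_top hmarkov
  rw [ENNReal.toReal_mul, ENNReal.toReal_ofReal hc.le, ENNReal.toReal_ofReal ha] at hreal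
  rw [le_div_iff₀ hc]
  linarith

end Truncation

theorem gap_probability_bound_general
    {Ω : Type*} [MeasurableSpace Ω] (ℙ : Measure Ω) [IsProbabilityMeasure ℙ]
    (d : Ω → ℤ → ℤ)
    (hmono : ∀ ω, Monotone (d ω))
    (hmeas : ∀ n : ℤ, Measurable fun ω => d ω n)
    (d₀ : ℕ)
    (hstat : ∀ n : ℤ, ℙ.map (fun ω => d ω n - n) = ℙ.map (fun ω => d ω 0))
    (ε : ℝ) (hε : 0 < ε) (k : ℕ) (hk : 1 ≤ k) :
    (ℙ {ω | ε * k ≤ ((d ω d₀ - d ω 0 : ℤ) : ℝ)}).toReal ≤ d₀ / (ε * k) := by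
  have hstat_int : ProbabilityTheory.IdentDistrib (fun ω => d ω d₀ - d₀) (fun ω => d ω 0) ℙ ℙ :=
    ⟨((hmeas _).sub_const _).aemeasurable, (hmeas 0).aemeasurable, hstat d₀⟩
  have hstat_real : ProbabilityTheory.IdentDistrib (fun ω => (d ω d₀ : ℝ) - d₀)
      (fun ω => (d ω 0 : ℝ)) ℙ ℙ := by
    convert hstat_int.comp (measurable_of_countable (Int.cast : ℤ → ℝ)) using 1 <;>
      ext <;> simp
  have hεk : 0 < ε * k := mul_pos hε (by exact_mod_cast hk)
  simpa using toReal_measure_sub_ge_le_div_of_identDistrib (Nat.cast_nonneg d₀)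
    (fun ω => Int.cast_le.2 (hmono ω d₀.cast_nonneg)) hstat_real hεk

theorem gap_probability_bound
    {Ω : Type*} [MeasurableSpace Ω] (ℙ : Measure Ω) [IsProbabilityMeasure ℙ]
    (T : Ω → Ω) (herg : Ergodic T ℙ)
    (d : Ω → ℤ → ℤ)
    (hmono : ∀ ω, Monotone (d ω))
    (hmeas : ∀ n : ℤ, Measurable fun ω => d ω n)
    (d₀ : ℕ) (hd₀ : 0 < d₀)
    (hequiv : ∀ ω (m : ℤ), d (T ω) m = d ω (m + d₀) - d₀)
    (hstat : ∀ n : ℤ, ℙ.map (fun ω => d ω n - n) = ℙ.map (fun ω => d ω 0))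
    (ε : ℝ) (hε : 0 < ε) (k : ℕ) (hk : 1 ≤ k) :
    (ℙ {ω | ε * k ≤ ((d ω d₀ - d ω 0 : ℤ) : ℝ)}).toReal ≤ d₀ / (ε * k) :=
  gap_probability_bound_general ℙ d hmono hmeas d₀ hstat ε hε k hk
end
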